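/- arXiv:2509.15474 — 5 statements merged into one kernel-verified Lean document; each statement's English description precedes it below -/
import Mathlib

section
/- Let ωₙ > 0, ξ ∈ (0,1), Δt > 0, and ω_d = ωₙ√(1−ξ²). For the real 2×2 matrix A = [[0,1],[−ωₙ²,−2ξωₙ]], the matrix exponential satisfies exp(Δt·A) = e^{−ξωₙΔt}·( cos(ω_dΔt)·I + (sin(ω_dΔt)/ω_d)·(A + ξωₙ·I) ). Equivalently, exp(Δt·A) equals e^{−ξωₙΔt} times the matrix with entries [cos(ω_dΔt) + (ξ/√(1−ξ²))sin(ω_dΔt), sin(ω_dΔt)/ω_d; −(ωₙ/√(1−ξ²))sin(ω_dΔt), cos(ω_dΔt) − (ξ/√(1−ξ²))sin(ω_dΔt)]. -/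
open Matrix NormedSpace

theorem stmt_2 (ωn ξ Δt ωd : ℝ) (hωn : 0 < ωn) (hξ : ξ ∈ Set.Ioo (0:ℝ) 1)
    (hΔt : 0 < Δt) (hωd : ωd = ωn * Real.sqrt (1 - ξ^2))
    (A : Matrix (Fin 2) (Fin 2) ℝ)
    (hA : A = !![0, 1; -ωn^2, -2*ξ*ωn]) :
    NormedSpace.exp (Δt • A)
      = Real.exp (-(ξ*ωn*Δt)) •
          (Real.cos (ωd*Δt) • (1 : Matrix (Fin 2) (Fin 2) ℝ)
            + (Real.sin (ωd*Δt) / ωd) • (A + (ξ*ωn) • (1 : Matrix (Fin 2) (Fin 2) ℝ))) ∧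
    NormedSpace.exp (Δt • A)
      = Real.exp (-(ξ*ωn*Δt)) •
          !![Real.cos (ωd*Δt) + (ξ / Real.sqrt (1 - ξ^2)) * Real.sin (ωd*Δt),
              Real.sin (ωd*Δt) / ωd;
             -(ωn / Real.sqrt (1 - ξ^2)) * Real.sin (ωd*Δt),
              Real.cos (ωd*Δt) - (ξ / Real.sqrt (1 - ξ^2)) * Real.sin (ωd*Δt)] := by
  obtain ⟨hξ0, hξ1⟩ := hξ
  have hs : (0:ℝ) < Real.sqrt (1 - ξ^2) := by
    apply Real.sqrt_pos.2; nlinarith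
  have hωdpos : 0 < ωd := by rw [hωd]; positivity
  have hωd2 : ωd^2 = ωn^2 * (1 - ξ^2) := by
    rw [hωd, mul_pow, Real.sq_sqrt (by nlinarith)]
  set M : Matrix (Fin 2) (Fin 2) ℝ := A + (ξ*ωn) • (1 : Matrix (Fin 2) (Fin 2) ℝ) with hM
  set J : Matrix (Fin 2) (Fin 2) ℝ := (ωd)⁻¹ • M with hJdef
  have hMM : M * M = (-(ωd^2)) • (1 : Matrix (Fin 2) (Fin 2) ℝ) := by
    rw [hM, hA, hωd2]
    ext i j
    fin_cases i <;> fin_cases j <;>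
      simp [Matrix.mul_apply, Fin.sum_univ_succ, Matrix.one_apply] <;> ring
  have hJ : J * J = -1 := by
    rw [hJdef, Matrix.smul_mul, Matrix.mul_smul, hMM, smul_smul, smul_smul]
    rw [show (ωd)⁻¹ * (ωd)⁻¹ * -(ωd^2) = -1 by field_simp]
    simp
  set f : ℂ →ₐ[ℝ] Matrix (Fin 2) (Fin 2) ℝ := Complex.liftAux J hJ with hf
  set a : ℝ := -(ξ*ωn*Δt) with ha
  set θ : ℝ := ωd * Δt with hθ
  have hz : f ((a : ℂ) + (θ : ℂ) * Complex.I) = Δt • A := by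
    rw [Complex.liftAux_apply]
    simp only [Complex.add_re, Complex.ofReal_re, Complex.mul_re, Complex.I_re,
      Complex.ofReal_im, Complex.I_im, Complex.add_im, Complex.mul_im,
      mul_zero, mul_one, zero_mul, sub_zero, add_zero, zero_add]
    rw [hJdef, hM, Algebra.algebraMap_eq_smul_one, smul_smul, smul_add, smul_smul]
    have h1 : θ * ωd⁻¹ = Δt := by rw [hθ]; field_simp
    rw [h1, add_comm (Δt • A), ← add_assoc, ← add_smul]
    rw [show a + Δt * (ξ * ωn) = 0 by rw [ha]; ring]
    simp
  have key : NormedSpace.exp (Δt • A)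
      = Real.exp a • (Real.cos θ • (1 : Matrix (Fin 2) (Fin 2) ℝ) + Real.sin θ • J) := by
    letI : SeminormedRing (Matrix (Fin 2) (Fin 2) ℝ) := Matrix.linftyOpSemiNormedRing
    letI : NormedRing (Matrix (Fin 2) (Fin 2) ℝ) := Matrix.linftyOpNormedRing
    letI : NormedAlgebra ℝ (Matrix (Fin 2) (Fin 2) ℝ) := Matrix.linftyOpNormedAlgebra
    have hfc : Continuous f := f.toLinearMap.continuous_of_finiteDimensional
    rw [← hz]
    erw [← NormedSpace.map_exp f hfc]
    rw [show NormedSpace.exp ((a : ℂ) + (θ : ℂ) * Complex.I)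
        = Complex.exp ((a : ℂ) + (θ : ℂ) * Complex.I) by
      rw [Complex.exp_eq_exp_ℂ]]
    rw [Complex.exp_add, Complex.exp_mul_I]
    rw [show Complex.exp (a:ℂ) = algebraMap ℝ ℂ (Real.exp a) by
      norm_cast]
    rw [_root_.map_mul, AlgHom.commutes, Algebra.algebraMap_eq_smul_one, smul_mul_assoc, one_mul]
    congr 1
    rw [Complex.liftAux_apply]
    simp only [Complex.add_re, Complex.cos_ofReal_re, Complex.mul_re, Complex.sin_ofReal_re,
      Complex.I_re, Complex.I_im, Complex.add_im, Complex.mul_im, Complex.cos_ofReal_im,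
      Complex.sin_ofReal_im, mul_zero, mul_one, zero_mul, sub_zero, add_zero, zero_add]
    rw [Algebra.algebraMap_eq_smul_one]
  have first : NormedSpace.exp (Δt • A)
      = Real.exp (-(ξ*ωn*Δt)) •
          (Real.cos (ωd*Δt) • (1 : Matrix (Fin 2) (Fin 2) ℝ)
            + (Real.sin (ωd*Δt) / ωd) • (A + (ξ*ωn) • (1 : Matrix (Fin 2) (Fin 2) ℝ))) := by
    rw [key, hJdef, smul_smul]
    rw [show Real.sin θ * ωd⁻¹ = Real.sin (ωd*Δt) / ωd by rw [hθ, div_eq_mul_inv]]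
  refine ⟨first, ?_⟩
  rw [first, hA]
  congr 1
  generalize Real.cos (ωd*Δt) = C
  generalize Real.sin (ωd*Δt) = S
  ext i j
  fin_cases i <;> fin_cases j <;>
    simp [Matrix.one_apply, hωd] <;> field_simp <;> ring
end

section
/- Let ωₙ > 0, ξ ∈ (0,1), Δt > 0, ω_d = ωₙ√(1−ξ²), and ρ = 1 + 2ξωₙΔt + ωₙ²Δt². The complex quadratic ρz² − 2(1 + ξωₙΔt)·z + 1 has roots p₁,₂ = (1 + ξωₙΔt ± i·ω_dΔt)/ρ, each of modulus 1/√ρ, and 1/√ρ < 1. -/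
theorem stmt_9 (ωn ξ Δt ωd ρ : ℝ) (hωn : 0 < ωn) (hξ : ξ ∈ Set.Ioo (0:ℝ) 1)
    (hΔt : 0 < Δt) (hωd : ωd = ωn * Real.sqrt (1 - ξ^2))
    (hρ : ρ = 1 + 2*ξ*ωn*Δt + ωn^2*Δt^2)
    (p₁ p₂ : ℂ)
    (hp₁ : p₁ = (((1 + ξ*ωn*Δt : ℝ) : ℂ) + Complex.I * ((ωd*Δt : ℝ) : ℂ)) / (ρ : ℂ))
    (hp₂ : p₂ = (((1 + ξ*ωn*Δt : ℝ) : ℂ) - Complex.I * ((ωd*Δt : ℝ) : ℂ)) / (ρ : ℂ)) :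
    ((ρ:ℂ) * p₁^2 - 2 * ((1 + ξ*ωn*Δt : ℝ) : ℂ) * p₁ + 1 = 0) ∧
    ((ρ:ℂ) * p₂^2 - 2 * ((1 + ξ*ωn*Δt : ℝ) : ℂ) * p₂ + 1 = 0) ∧
    ‖p₁‖ = 1 / Real.sqrt ρ ∧
    ‖p₂‖ = 1 / Real.sqrt ρ ∧
    1 / Real.sqrt ρ < 1 := by
  obtain ⟨hξ0, hξ1⟩ := hξ
  have h1ξ : (0:ℝ) ≤ 1 - ξ^2 := by nlinarith
  have hωd2 : ωd^2 = ωn^2 * (1 - ξ^2) := by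
    rw [hωd, mul_pow, Real.sq_sqrt h1ξ]
  have key : (1 + ξ*ωn*Δt)^2 + (ωd*Δt)^2 = ρ := by
    rw [hρ]; rw [mul_pow, hωd2]; ring
  have hρ1 : 1 < ρ := by
    rw [hρ]
    nlinarith [mul_pos hξ0 (mul_pos hωn hΔt), mul_pos (pow_pos hωn 2) (pow_pos hΔt 2)]
  have hρ0 : (0:ℝ) < ρ := by linarith
  have hρC : (ρ:ℂ) ≠ 0 := by exact_mod_cast hρ0.ne'
  have keyC : (((1 + ξ*ωn*Δt : ℝ) : ℂ))^2 + (((ωd*Δt : ℝ) : ℂ))^2 = (ρ:ℂ) := by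
    exact_mod_cast key
  have hsρ : Real.sqrt ρ > 1 := by
    have := Real.lt_sqrt (x := 1) (y := ρ) zero_le_one
    simpa using this.mpr (by simpa using hρ1)
  have habs : ∀ (d : ℝ), ‖(((1 + ξ*ωn*Δt : ℝ) : ℂ)) + Complex.I * ((d : ℝ) : ℂ)‖ = Real.sqrt ((1 + ξ*ωn*Δt)^2 + d^2) := by
    intro d
    have : (((1 + ξ*ωn*Δt : ℝ) : ℂ)) + Complex.I * ((d : ℝ) : ℂ) = ((1 + ξ*ωn*Δt : ℝ) : ℂ) + (d:ℂ) * Complex.I := by ring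
    rw [this, Complex.norm_add_mul_I]
  have habsρ : ‖(ρ:ℂ)‖ = ρ := by
    rw [Complex.norm_real, Real.norm_eq_abs, abs_of_pos hρ0]
  have hfinal : Real.sqrt ρ / ρ = 1 / Real.sqrt ρ := by
    rw [eq_div_iff (by positivity), div_mul_eq_mul_div, Real.mul_self_sqrt hρ0.le, div_self hρ0.ne']
  refine ⟨?_, ?_, ?_, ?_, ?_⟩
  · have hq : (ρ:ℂ) * p₁ = ((1 + ξ*ωn*Δt : ℝ) : ℂ) + Complex.I * ((ωd*Δt : ℝ) : ℂ) := by
      rw [hp₁]; field_simp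
    have h2 : (ρ:ℂ) * ((ρ:ℂ) * p₁^2 - 2 * ((1 + ξ*ωn*Δt : ℝ) : ℂ) * p₁ + 1) = 0 := by
      linear_combination ((ρ:ℂ)*p₁ + Complex.I*((ωd*Δt:ℝ):ℂ) - ((1 + ξ*ωn*Δt:ℝ):ℂ)) * hq
        + ((ωd*Δt:ℝ):ℂ)^2 * Complex.I_sq - keyC
    exact (mul_eq_zero.mp h2).resolve_left hρC
  · have hq : (ρ:ℂ) * p₂ = ((1 + ξ*ωn*Δt : ℝ) : ℂ) - Complex.I * ((ωd*Δt : ℝ) : ℂ) := by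
      rw [hp₂]; field_simp
    have h2 : (ρ:ℂ) * ((ρ:ℂ) * p₂^2 - 2 * ((1 + ξ*ωn*Δt : ℝ) : ℂ) * p₂ + 1) = 0 := by
      linear_combination ((ρ:ℂ)*p₂ - Complex.I*((ωd*Δt:ℝ):ℂ) - ((1 + ξ*ωn*Δt:ℝ):ℂ)) * hq
        + ((ωd*Δt:ℝ):ℂ)^2 * Complex.I_sq - keyC
    exact (mul_eq_zero.mp h2).resolve_left hρC
  · rw [hp₁, norm_div, habs, key, habsρ, hfinal]
  · have : p₂ = (((1 + ξ*ωn*Δt : ℝ) : ℂ) + Complex.I * ((-(ωd*Δt) : ℝ) : ℂ)) / (ρ : ℂ) := by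
      rw [hp₂]; push_cast; ring
    rw [this, norm_div, habs, neg_pow, habsρ]
    simpa [key] using hfinal
  · rw [div_lt_one (by positivity)]; exact hsρ
end

section
/- Let ωₙ > 0, Δt > 0, and ξ a real number with |ξ| < 1, and set ρ = 1 + 2ξωₙΔt + ωₙ²Δt² and ω_d = ωₙ√(1−ξ²). Then ρ > 0, the complex quadratic ρz² − 2(1 + ξωₙΔt)·z + 1 has the complex-conjugate roots p₁,₂ = (1 + ξωₙΔt ± i·ω_dΔt)/ρ, each of modulus 1/√ρ, and this modulus is strictly less than 1 if and only if ξ > −ωₙΔt/2. -/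
theorem stmt_13 (ωn Δt ξ ρ ωd : ℝ) (hωn : 0 < ωn) (hΔt : 0 < Δt)
    (hξ : |ξ| < 1)
    (hρ : ρ = 1 + 2*ξ*ωn*Δt + ωn^2*Δt^2)
    (hωd : ωd = ωn * Real.sqrt (1 - ξ^2))
    (p₁ p₂ : ℂ)
    (hp₁ : p₁ = (((1 + ξ*ωn*Δt : ℝ) : ℂ) + Complex.I * ((ωd*Δt : ℝ) : ℂ)) / (ρ : ℂ))
    (hp₂ : p₂ = (((1 + ξ*ωn*Δt : ℝ) : ℂ) - Complex.I * ((ωd*Δt : ℝ) : ℂ)) / (ρ : ℂ)) :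
    0 < ρ ∧
    p₂ = (starRingEnd ℂ) p₁ ∧
    ((ρ:ℂ) * p₁^2 - 2 * ((1 + ξ*ωn*Δt : ℝ) : ℂ) * p₁ + 1 = 0) ∧
    ((ρ:ℂ) * p₂^2 - 2 * ((1 + ξ*ωn*Δt : ℝ) : ℂ) * p₂ + 1 = 0) ∧
    ‖p₁‖ = 1 / Real.sqrt ρ ∧
    ‖p₂‖ = 1 / Real.sqrt ρ ∧
    (1 / Real.sqrt ρ < 1 ↔ -(ωn*Δt/2) < ξ) := by
  have hξ2 : ξ^2 < 1 := by nlinarith [abs_nonneg ξ, sq_abs ξ, abs_lt.mp hξ]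
  have h1ξ : (0:ℝ) ≤ 1 - ξ^2 := by linarith
  have hωd2 : ωd^2 = ωn^2 * (1 - ξ^2) := by
    rw [hωd, mul_pow, Real.sq_sqrt h1ξ]
  have hkey : (1 + ξ*ωn*Δt)^2 + (ωd*Δt)^2 = ρ := by
    rw [hρ]; nlinarith [hωd2]
  have hρpos : 0 < ρ := by nlinarith [sq_nonneg (1 + ξ*ωn*Δt), sq_nonneg (ωd*Δt), mul_pos (mul_pos hωn hΔt) (mul_pos hωn hΔt), mul_pos hωn hΔt]
  have hρC : (ρ:ℂ) ≠ 0 := by exact_mod_cast hρpos.ne'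
  have hkeyC : (((1 + ξ*ωn*Δt : ℝ):ℂ))^2 + (((ωd*Δt : ℝ):ℂ))^2 = (ρ:ℂ) := by
    exact_mod_cast congrArg (Complex.ofReal) hkey
  have hconj : p₂ = (starRingEnd ℂ) p₁ := by
    rw [hp₁, hp₂, map_div₀, map_add, map_mul, Complex.conj_ofReal, Complex.conj_ofReal,
      Complex.conj_I, Complex.conj_ofReal]
    ring
  have hmul1 : (ρ:ℂ) * p₁ = ((1 + ξ*ωn*Δt : ℝ) : ℂ) + Complex.I * ((ωd*Δt : ℝ) : ℂ) := by
    rw [hp₁]; field_simp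
  have hmul2 : (ρ:ℂ) * p₂ = ((1 + ξ*ωn*Δt : ℝ) : ℂ) - Complex.I * ((ωd*Δt : ℝ) : ℂ) := by
    rw [hp₂]; field_simp
  have hroot1 : (ρ:ℂ) * p₁^2 - 2 * ((1 + ξ*ωn*Δt : ℝ) : ℂ) * p₁ + 1 = 0 := by
    apply mul_left_cancel₀ hρC
    rw [mul_zero]
    linear_combination ((ρ:ℂ)*p₁ + (((1 + ξ*ωn*Δt : ℝ):ℂ) + Complex.I * ((ωd*Δt : ℝ):ℂ))
      - 2*((1 + ξ*ωn*Δt : ℝ):ℂ)) * hmul1 + (((ωd*Δt : ℝ):ℂ))^2 * Complex.I_sq - hkeyC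
  have hroot2 : (ρ:ℂ) * p₂^2 - 2 * ((1 + ξ*ωn*Δt : ℝ) : ℂ) * p₂ + 1 = 0 := by
    apply mul_left_cancel₀ hρC
    rw [mul_zero]
    linear_combination ((ρ:ℂ)*p₂ + (((1 + ξ*ωn*Δt : ℝ):ℂ) - Complex.I * ((ωd*Δt : ℝ):ℂ))
      - 2*((1 + ξ*ωn*Δt : ℝ):ℂ)) * hmul2 + (((ωd*Δt : ℝ):ℂ))^2 * Complex.I_sq - hkeyC
  have habs1 : ‖p₁‖ = 1 / Real.sqrt ρ := by
    rw [hp₁, mul_comm Complex.I, norm_div, Complex.norm_real, Complex.norm_add_mul_I,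
      Real.norm_of_nonneg hρpos.le, hkey]
    rw [div_eq_div_iff hρpos.ne' (Real.sqrt_pos.mpr hρpos).ne']
    rw [Real.mul_self_sqrt hρpos.le, one_mul]
  have habs2 : ‖p₂‖ = 1 / Real.sqrt ρ := by
    rw [hconj, Complex.norm_conj, habs1]
  refine ⟨hρpos, hconj, hroot1, hroot2, habs1, habs2, ?_⟩
  have hsqrtpos : 0 < Real.sqrt ρ := Real.sqrt_pos.mpr hρpos
  rw [div_lt_one hsqrtpos, show (1:ℝ) = Real.sqrt 1 by simp,
    Real.sqrt_lt_sqrt_iff (by norm_num)]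
  constructor
  · intro h; nlinarith [mul_pos hωn hΔt]
  · intro h; nlinarith [mul_pos hωn hΔt]
end

section
/- Let ωₙ > 0, Δt > 0, ξ ∈ [0,1), and β ∈ [1/6, 1/4), and set b₁ = ωₙ²Δt² and b₂ = 2ξωₙΔt. Then b₁²(β − 1/4) + b₁ − b₂²/4 ≥ 0 if and only if Δt ≤ 2√(1−ξ²)/(ωₙ√(1 − 4β)). -/
theorem stmt_16 (ωn Δt ξ β b₁ b₂ : ℝ) (hωn : 0 < ωn) (hΔt : 0 < Δt)
    (hξ : ξ ∈ Set.Ico (0:ℝ) 1) (hβ : β ∈ Set.Ico (1/6 : ℝ) (1/4))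
    (hb₁ : b₁ = ωn^2*Δt^2) (hb₂ : b₂ = 2*ξ*ωn*Δt) :
    0 ≤ b₁^2 * (β - 1/4) + b₁ - b₂^2/4 ↔
      Δt ≤ 2 * Real.sqrt (1 - ξ^2) / (ωn * Real.sqrt (1 - 4*β)) := by
  obtain ⟨hξ0, hξ1⟩ := hξ
  obtain ⟨hβ0, hβ1⟩ := hβ
  subst hb₁ hb₂
  have h1 : (0:ℝ) < 1 - ξ^2 := by nlinarith
  have h2 : (0:ℝ) < 1 - 4*β := by linarith
  have hs : Real.sqrt (1 - ξ^2) ^ 2 = 1 - ξ^2 := Real.sq_sqrt h1.le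
  have ht : Real.sqrt (1 - 4*β) ^ 2 = 1 - 4*β := Real.sq_sqrt h2.le
  have hspos : 0 < Real.sqrt (1 - ξ^2) := Real.sqrt_pos.mpr h1
  have htpos : 0 < Real.sqrt (1 - 4*β) := Real.sqrt_pos.mpr h2
  rw [le_div_iff₀ (by positivity)]
  constructor
  · intro h
    have hA : (Δt * (ωn * Real.sqrt (1 - 4*β)))^2 ≤ (2 * Real.sqrt (1 - ξ^2))^2 := by
      rw [mul_pow, mul_pow, mul_pow, hs, ht]; nlinarith [h]
    have hapb : 0 < Δt * (ωn * Real.sqrt (1 - 4*β)) + 2 * Real.sqrt (1 - ξ^2) := by positivity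
    nlinarith [hA, hapb]
  · intro h
    have hA : (Δt * (ωn * Real.sqrt (1 - 4*β)))^2 ≤ (2 * Real.sqrt (1 - ξ^2))^2 :=
      pow_le_pow_left₀ (by positivity) h 2
    rw [mul_pow, mul_pow, mul_pow, hs, ht] at hA
    nlinarith [hA, sq_nonneg (ωn*Δt), mul_pos hωn hΔt]
end

section
/- Let ωₙ > 0, Δt > 0, and β ≥ 0, set b₁ = ωₙ²Δt², and assume b₁²(β − 1/4) + b₁ ≥ 0. Then the complex numbers λ± = (1 + b₁(β − 1/2) ± i·√(b₁²(β − 1/4) + b₁))/(1 + βb₁) satisfy |λ±| = 1. -/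
theorem stmt_18 (ωn Δt β b₁ : ℝ) (hωn : 0 < ωn) (hΔt : 0 < Δt) (hβ : 0 ≤ β)
    (hb₁ : b₁ = ωn^2*Δt^2)
    (hdisc : 0 ≤ b₁^2 * (β - 1/4) + b₁)
    (lamPlus lamMinus : ℂ)
    (hp : lamPlus = (((1 + b₁*(β - 1/2) : ℝ) : ℂ)
        + Complex.I * ((Real.sqrt (b₁^2 * (β - 1/4) + b₁) : ℝ) : ℂ)) / ((1 + β*b₁ : ℝ) : ℂ))
    (hm : lamMinus = (((1 + b₁*(β - 1/2) : ℝ) : ℂ)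
        - Complex.I * ((Real.sqrt (b₁^2 * (β - 1/4) + b₁) : ℝ) : ℂ)) / ((1 + β*b₁ : ℝ) : ℂ)) :
    ‖lamPlus‖ = 1 ∧ ‖lamMinus‖ = 1 := by
  have hb : 0 < b₁ := by rw [hb₁]; positivity
  have hden : 0 < 1 + β*b₁ := by nlinarith
  set x : ℝ := 1 + b₁*(β - 1/2) with hx
  set y : ℝ := Real.sqrt (b₁^2 * (β - 1/4) + b₁) with hy
  have hy2 : y^2 = b₁^2 * (β - 1/4) + b₁ := Real.sq_sqrt hdisc
  have key : x^2 + y^2 = (1 + β*b₁)^2 := by rw [hy2, hx]; ring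
  constructor
  · rw [hp, norm_div]
    have h1 : ‖(x:ℂ) + Complex.I * (y:ℂ)‖ = 1 + β*b₁ := by
      rw [Complex.norm_def, Complex.normSq_apply]
      simp [Complex.add_re, Complex.add_im, Complex.mul_re, Complex.mul_im]
      rw [show x*x + y*y = (1+β*b₁)^2 by nlinarith [key], Real.sqrt_sq hden.le]
    rw [h1, Complex.norm_real, Real.norm_of_nonneg hden.le, div_self hden.ne']
  · rw [hm, norm_div]
    have h1 : ‖(x:ℂ) - Complex.I * (y:ℂ)‖ = 1 + β*b₁ := by
      rw [Complex.norm_def, Complex.normSq_apply]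
      simp [Complex.sub_re, Complex.sub_im, Complex.mul_re, Complex.mul_im]
      rw [show x*x + y*y = (1+β*b₁)^2 by nlinarith [key], Real.sqrt_sq hden.le]
    rw [h1, Complex.norm_real, Real.norm_of_nonneg hden.le, div_self hden.ne']
end
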